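/- For every θ ∈ ℝⁿ, the point η = ∇ψ(θ), whose components are η_i = e^{θ_i}/(1 + Σ_{j=1}^n e^{θ_j}), lies in Δ_n, and the Hessians of φ and ψ are mutually inverse matrices at corresponding points: ∇²φ(η) · ∇²ψ(θ) = I. -/

import Mathlib

open Filter

noncomputable section

abbrev E (n : ℕ) := EuclideanSpace ℝ (Fin n)

/-- The open probability simplex `S_n` inside `ℝ^{n+1}`. -/
def simplex (n : ℕ) : Set (Fin (n+1) → ℝ) :=
  {p | (∀ i, 0 < p i) ∧ ∑ i, p i = 1}

/-- The mixture (`η`) coordinate domain `Δ_n`. -/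
def Δset (n : ℕ) : Set (E n) := {η | (∀ i, 0 < η i) ∧ ∑ i, η i < 1}

/-- The distribution in `S_n` corresponding to `η` coordinates. -/
def mixDist {n : ℕ} (η : E n) : Fin (n+1) → ℝ :=
  Fin.snoc (fun i => η i) (1 - ∑ i, η i)

/-- The distribution in `S_n` corresponding to `θ` coordinates. -/
def expDist {n : ℕ} (θ : E n) : Fin (n+1) → ℝ :=
  Fin.snoc (fun i => Real.exp (θ i) / (1 + ∑ j, Real.exp (θ j)))
    (1 / (1 + ∑ j, Real.exp (θ j)))

/-- The `η` coordinates of a distribution `q ∈ S_n`. -/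
def etaCoord {n : ℕ} (q : Fin (n+1) → ℝ) : E n := WithLp.toLp 2 (fun i => q i.castSucc)

/-- The `θ` coordinates of a distribution `q ∈ S_n`. -/
def thetaCoord {n : ℕ} (q : Fin (n+1) → ℝ) : E n :=
  WithLp.toLp 2 (fun i => Real.log (q i.castSucc / q (Fin.last n)))

/-- Kullback–Leibler divergence `D(q‖p)`. -/
def KL {n : ℕ} (q p : Fin (n+1) → ℝ) : ℝ := ∑ i, q i * Real.log (q i / p i)

/-- Log-partition function `ψ(θ) = log(1 + Σ e^{θ_i})`. -/
def psi {n : ℕ} (θ : E n) : ℝ := Real.log (1 + ∑ i, Real.exp (θ i))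

/-- Negative entropy `φ(η)`. -/
def phi {n : ℕ} (η : E n) : ℝ :=
  (∑ i, η i * Real.log (η i)) + (1 - ∑ i, η i) * Real.log (1 - ∑ i, η i)

/-- The loss `L_q` in `η` coordinates: `η ↦ D(q ‖ p(η))`. -/
def Leta {n : ℕ} (q : Fin (n+1) → ℝ) (η : E n) : ℝ := KL q (mixDist η)

/-- The loss `L_q` in `θ` coordinates: `θ ↦ D(q ‖ p(θ))`. -/
def Ltheta {n : ℕ} (q : Fin (n+1) → ℝ) (θ : E n) : ℝ := KL q (expDist θ)

/-- The Hessian of `f : ℝⁿ → ℝ` at `x`, as the `n × n` matrix of second partial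
derivatives. -/
def hess {n : ℕ} (f : E n → ℝ) (x : E n) : Matrix (Fin n) (Fin n) ℝ :=
  Matrix.of fun i j =>
    fderiv ℝ (fun y => fderiv ℝ f y (EuclideanSpace.single j 1)) x (EuclideanSpace.single i 1)

/-- The set of (real) eigenvalues of a matrix. -/
def lamSet {n : ℕ} (A : Matrix (Fin n) (Fin n) ℝ) : Set ℝ :=
  {μ | ∃ v : Fin n → ℝ, v ≠ 0 ∧ A.mulVec v = μ • v}

/-- Largest eigenvalue `λ_max`. -/
def lamMax {n : ℕ} (A : Matrix (Fin n) (Fin n) ℝ) : ℝ := sSup (lamSet A)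

/-- Smallest eigenvalue `λ_min`. -/
def lamMin {n : ℕ} (A : Matrix (Fin n) (Fin n) ℝ) : ℝ := sInf (lamSet A)

/-- Condition number `cond(A) = λ_max(A)/λ_min(A)`. -/
def condNum {n : ℕ} (A : Matrix (Fin n) (Fin n) ℝ) : ℝ := lamMax A / lamMin A

/-- Operator 2-norm of a matrix (induced by the Euclidean norm). -/
def opNorm {n : ℕ} (A : Matrix (Fin n) (Fin n) ℝ) : ℝ :=
  ‖Matrix.toEuclideanCLM (𝕜 := ℝ) A‖

/-! Writing `η = ∇ψ(θ)`, one has `η_i = exp (θ_i - ψ θ)`, so `∇²ψ(θ) = diag η - η ηᵀ`. On the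
other side `∂_j φ = log η_j - log (1 - Σ η)`, so `∇²φ(η) = diag η⁻¹ + (1 - Σ η)⁻¹ 𝟙𝟙ᵀ`, and the
Sherman–Morrison formula says exactly that these two matrices are mutually inverse. -/

open Real Matrix Topology

lemma EuclideanSpace.gradient_apply {ι : Type*} [Fintype ι] [DecidableEq ι]
    (f : EuclideanSpace ℝ ι → ℝ) (x : EuclideanSpace ℝ ι) (i : ι) :
    gradient f x i = fderiv ℝ f x (EuclideanSpace.single i 1) := by
  rw [← toDual_gradient, InnerProductSpace.toDual_apply_apply, EuclideanSpace.inner_single_right]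
  simp

theorem Matrix.diagonal_inv_add_const_mul_diagonal_sub_vecMulVec
    {K ι : Type*} [Field K] [Fintype ι] [DecidableEq ι] (a : ι → K) (ha : ∀ i, a i ≠ 0)
    (hs : ∑ i, a i ≠ 1) :
    (diagonal a⁻¹ + of fun _ _ => (1 - ∑ i, a i)⁻¹) * (diagonal a - vecMulVec a a) = 1 := by
  have hc : 1 - ∑ i, a i ≠ 0 := sub_ne_zero.mpr hs.symm
  ext i k
  simp only [mul_apply, add_apply, sub_apply, of_apply, diagonal_apply, vecMulVec_apply,
    Pi.inv_apply, add_mul, mul_sub, ite_mul, zero_mul, Finset.sum_add_distrib,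
    Finset.sum_sub_distrib, Finset.sum_ite_eq, Finset.sum_ite_eq', Finset.mem_univ, if_true,
    ← Finset.mul_sum, ← Finset.sum_mul, one_apply]
  have hai := ha i
  split_ifs with hik
  · subst hik; field_simp; ring
  · field_simp; ring

section

variable {n : ℕ}

open EuclideanSpace (proj)

lemma hess_eq_of_eventuallyEq_fderiv {f : E n → ℝ} {x : E n} {g : Fin n → E n → ℝ}
    {g' : Fin n → E n →L[ℝ] ℝ}
    (hf : ∀ j, (fun y => fderiv ℝ f y (EuclideanSpace.single j 1)) =ᶠ[𝓝 x] g j)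
    (hg : ∀ j, HasFDerivAt (g j) (g' j) x) :
    hess f x = of fun i j => g' j (EuclideanSpace.single i 1) := by
  ext i j
  rw [hess, of_apply, of_apply, (hf j).fderiv_eq, (hg j).fderiv]

def meanParam (θ : E n) (i : Fin n) : ℝ := exp (θ i) / (1 + ∑ j, exp (θ j))

lemma one_add_sum_exp_pos (θ : E n) : 0 < 1 + ∑ j, exp (θ j) := by positivity

lemma meanParam_pos (θ : E n) (i : Fin n) : 0 < meanParam θ i :=
  div_pos (exp_pos _) (one_add_sum_exp_pos θ)

lemma sum_meanParam_lt_one (θ : E n) : ∑ i, meanParam θ i < 1 := by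
  unfold meanParam
  rw [← Finset.sum_div, div_lt_one (one_add_sum_exp_pos θ)]
  exact lt_one_add _

lemma meanParam_eq_exp_sub_psi (θ : E n) (i : Fin n) : meanParam θ i = exp (θ i - psi θ) := by
  rw [exp_sub, psi, exp_log (one_add_sum_exp_pos θ), meanParam]

lemma hasFDerivAt_psi (θ : E n) :
    HasFDerivAt psi (∑ i, meanParam θ i • proj (𝕜 := ℝ) i) θ := by
  have hZ : HasFDerivAt (fun y : E n => 1 + ∑ i, exp (y i))
      (∑ i, exp (θ i) • proj (𝕜 := ℝ) i) θ :=
    (HasFDerivAt.fun_sum fun i _ => (proj i).hasFDerivAt.exp).const_add 1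
  refine (hZ.log (one_add_sum_exp_pos θ).ne').congr_fderiv ?_
  simp only [Finset.smul_sum, smul_smul, meanParam, div_eq_inv_mul]

lemma fderiv_psi_single (θ : E n) (j : Fin n) :
    fderiv ℝ psi θ (EuclideanSpace.single j 1) = meanParam θ j := by
  simp [(hasFDerivAt_psi θ).fderiv, PiLp.single_apply]

lemma gradient_psi (θ : E n) : gradient psi θ = WithLp.toLp 2 (meanParam θ) := by
  ext i
  rw [EuclideanSpace.gradient_apply, fderiv_psi_single]

lemma hasFDerivAt_meanParam (θ : E n) (j : Fin n) :
    HasFDerivAt (fun y => meanParam y j)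
      (meanParam θ j • (proj (𝕜 := ℝ) j - ∑ i, meanParam θ i • proj i)) θ := by
  rw [funext fun y => meanParam_eq_exp_sub_psi y j, meanParam_eq_exp_sub_psi]
  exact ((proj j).hasFDerivAt.fun_sub (hasFDerivAt_psi θ)).exp

lemma hess_psi (θ : E n) :
    hess psi θ = diagonal (meanParam θ) - vecMulVec (meanParam θ) (meanParam θ) := by
  rw [hess_eq_of_eventuallyEq_fderiv (g := fun j y => meanParam y j)
    (fun j => .of_forall fun y => fderiv_psi_single y j) (hasFDerivAt_meanParam θ)]
  ext i j
  obtain rfl | hij := eq_or_ne i j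
  · simp [vecMulVec_apply, PiLp.single_apply]; ring
  · simp [vecMulVec_apply, PiLp.single_apply, hij, hij.symm, mul_comm]

lemma isOpen_Δset : IsOpen (Δset n) := by
  simp only [Δset, Set.ofPred_and, Set.ofPred_forall]
  exact (isOpen_iInter_of_finite fun i => isOpen_lt continuous_const (proj i).continuous).inter
    (isOpen_lt (continuous_finsetSum _ fun i _ => (proj i).continuous) continuous_const)

lemma hasFDerivAt_sum_apply (x : E n) :
    HasFDerivAt (fun y : E n => ∑ i, y i) (∑ i, proj (𝕜 := ℝ) i) x :=
  HasFDerivAt.fun_sum fun i _ => (proj (𝕜 := ℝ) i).hasFDerivAt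

lemma hasFDerivAt_phi {η : E n} (hη : η ∈ Δset n) :
    HasFDerivAt phi
      (∑ i, (log (η i) + 1) • proj i - (log (1 - ∑ i, η i) + 1) • ∑ i, proj (𝕜 := ℝ) i) η := by
  obtain ⟨hpos, hlt⟩ := hη
  have hcoord := HasFDerivAt.fun_sum (u := Finset.univ) fun i _ =>
    (hasDerivAt_mul_log (hpos i).ne').comp_hasFDerivAt η (proj (𝕜 := ℝ) i).hasFDerivAt
  have hrest := (hasDerivAt_mul_log (sub_pos.2 hlt).ne').comp_hasFDerivAt η
    ((hasFDerivAt_sum_apply η).const_sub 1)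
  exact (hcoord.add hrest).congr_fderiv (by rw [smul_neg, ← sub_eq_add_neg])

lemma fderiv_phi_single {η : E n} (hη : η ∈ Δset n) (j : Fin n) :
    fderiv ℝ phi η (EuclideanSpace.single j 1) = log (η j) - log (1 - ∑ i, η i) := by
  simp [(hasFDerivAt_phi hη).fderiv, PiLp.single_apply]

lemma hess_phi {η : E n} (hη : η ∈ Δset n) :
    hess phi η = diagonal (fun i => (η i)⁻¹) + of fun _ _ => (1 - ∑ i, η i)⁻¹ := by
  obtain ⟨hpos, hlt⟩ := id hη
  have hpartial (j : Fin n) : HasFDerivAt (fun y : E n => log (y j) - log (1 - ∑ i, y i))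
      ((η j)⁻¹ • proj j - (1 - ∑ i, η i)⁻¹ • -∑ i, proj i) η :=
    ((proj j).hasFDerivAt.log (hpos j).ne').fun_sub
      (((hasFDerivAt_sum_apply η).const_sub 1).log (sub_pos.2 hlt).ne')
  rw [hess_eq_of_eventuallyEq_fderiv (fun j => Filter.eventually_of_mem
    (isOpen_Δset.mem_nhds hη) fun y hy => fderiv_phi_single hy j) hpartial]
  ext i j
  obtain rfl | hij := eq_or_ne i j
  · simp [PiLp.single_apply]
  · simp [PiLp.single_apply, hij, hij.symm]

end

/-- `η = ∇ψ(θ)` lies in `Δ_n` and `∇²φ(η) · ∇²ψ(θ) = I`. -/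
theorem stmt_4 {n : ℕ} (θ : E n) :
    (∀ i, gradient psi θ i = Real.exp (θ i) / (1 + ∑ j, Real.exp (θ j))) ∧
    gradient psi θ ∈ Δset n ∧
    hess phi (gradient psi θ) * hess psi θ = 1 := by
  have hmem : WithLp.toLp 2 (meanParam θ) ∈ Δset n :=
    ⟨meanParam_pos θ, sum_meanParam_lt_one θ⟩
  rw [gradient_psi]
  refine ⟨fun i => rfl, hmem, ?_⟩
  rw [hess_phi hmem, hess_psi]
  exact diagonal_inv_add_const_mul_diagonal_sub_vecMulVec (meanParam θ)
    (fun i => (meanParam_pos θ i).ne') (sum_meanParam_lt_one θ).ne
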